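/- The reduction number r_Q(I) equals min{ n ≥ 0 : Kⁿ = K^{n+1} }; consequently S = Kⁿ for all n ≥ r_Q(I). -/

import Mathlib

open IsLocalRing Polynomial

set_option maxHeartbeats 1000000
set_option synthInstance.maxHeartbeats 400000

noncomputable section

/-- The (ℕ-valued) length `ℓ_R(M)` of an `R`-module `M`, defined as the Krull dimension of
its lattice of submodules (with junk value `0` if the length is infinite). -/
noncomputable def flen (R M : Type*) [Ring R] [AddCommGroup M] [Module R M] : ℕ :=
  ((Order.krullDim (Submodule R M)).unbotD 0).toNat

/-- The quotient module `Y/X` for submodules `X ⊆ Y` of a module. -/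
noncomputable abbrev quotMod {R M : Type*} [CommRing R] [AddCommGroup M] [Module R M]
    (Y X : Submodule R M) :=
  ↥Y ⧸ X.comap Y.subtype

/-- `colen Y X = ℓ_R(Y/X)`. -/
noncomputable def colen {R M : Type*} [CommRing R] [AddCommGroup M] [Module R M]
    (Y X : Submodule R M) : ℕ :=
  flen R (quotMod Y X)

/-- The fractional ideal `K = I/a = {x/a : x ∈ I}` inside the total quotient ring of `R`. -/
noncomputable def Kfrac (R : Type*) [CommRing R] (I : Ideal R) (a : R) :
    Submodule R (FractionRing R) :=
  Submodule.span R {z : FractionRing R |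
    ∃ x ∈ I, z * algebraMap R (FractionRing R) a = algebraMap R (FractionRing R) x}

/-- The ring `S = R[K]`. -/
noncomputable def Sring (R : Type*) [CommRing R] (I : Ideal R) (a : R) :
    Subalgebra R (FractionRing R) :=
  Algebra.adjoin R (Kfrac R I a : Set (FractionRing R))

/-- `S = R[K]` as an `R`-submodule of the total quotient ring. -/
noncomputable def Smod (R : Type*) [CommRing R] (I : Ideal R) (a : R) :
    Submodule R (FractionRing R) :=
  Subalgebra.toSubmodule (Sring R I a)

/-- The conductor `𝔠 = R : S`, as a submodule of the total quotient ring. -/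
noncomputable def condS (R : Type*) [CommRing R] (I : Ideal R) (a : R) :
    Submodule R (FractionRing R) :=
  (1 : Submodule R (FractionRing R)) / Smod R I a

/-- The conductor `𝔠 = R : S`, as an ideal of `R`. -/
noncomputable def condIdeal (R : Type*) [CommRing R] (I : Ideal R) (a : R) : Ideal R :=
  (condS R I a).comap (Algebra.linearMap R (FractionRing R))

/-- The image of the maximal ideal `m` in the total quotient ring. -/
noncomputable def mSub (R : Type*) [CommRing R] [IsLocalRing R] :
    Submodule R (FractionRing R) :=
  Submodule.map (Algebra.linearMap R (FractionRing R)) (maximalIdeal R)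

/-- A fractional ideal `K` is a canonical module of `R` (the Herzog–Kunz duality
characterization): `K : (K : J) = J` for every finitely generated regular fractional ideal. -/
def IsCanonicalSub (R : Type*) [CommRing R] (K : Submodule R (FractionRing R)) : Prop :=
  ∀ J : Submodule R (FractionRing R), J.FG → (∃ z ∈ J, IsUnit z) → K / (K / J) = J

/-- The setting: `I ≠ R` is a canonical ideal of `R` (i.e. `I ≅ K_R`, expressed via the
Herzog–Kunz duality property of `K = I/a`), containing the parameter ideal `Q = (a)`
(`a` a non-zerodivisor) as a reduction. -/
structure CanSetting (R : Type*) [CommRing R] (I : Ideal R) (a : R) : Prop where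
  ne_top : I ≠ ⊤
  mem : a ∈ I
  nzd : a ∈ nonZeroDivisors R
  red : ∃ n : ℕ, I ^ (n + 1) = Ideal.span {a} * I ^ n
  canonical : IsCanonicalSub R (Kfrac R I a)

/-- `μ_R(M)`: the minimal number of generators `ℓ_R(M/mM)`. -/
noncomputable def muR (R : Type*) [CommRing R] [IsLocalRing R]
    (M : Type*) [AddCommGroup M] [Module R M] : ℕ :=
  flen R (M ⧸ (maximalIdeal R • ⊤ : Submodule R M))

/-- The Sally module `S_Q(I)` of `I` with respect to `Q = (a)` has rank `r`, i.e. the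
eventually constant value of `ℓ_R(I^{n+1}/Q^n I) = ℓ_R([S_Q(I)]_n)` equals `r`. -/
def SallyRankIs (R : Type*) [CommRing R] (I : Ideal R) (a : R) (r : ℕ) : Prop :=
  ∃ N : ℕ, ∀ n ≥ N, colen (I ^ (n + 1)) (Ideal.span {a} ^ n * I) = r

/-- `e0` and `e1` are the Hilbert coefficients of the `m`-primary ideal `I`:
`ℓ_R(R/I^{n+1}) = e0·(n+1) - e1` for all large `n`. -/
def IsHilbCoeffs (R : Type*) [CommRing R] (I : Ideal R) (e0 e1 : ℤ) : Prop :=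
  ∃ N : ℕ, ∀ n ≥ N, (flen R (R ⧸ I ^ (n + 1)) : ℤ) = e0 * (n + 1) - e1

/-- The multiplicity `e(A) = e_m^0(A)` of a one-dimensional local ring equals `e`. -/
def RingMultIs (A : Type*) [CommRing A] [IsLocalRing A] (e : ℕ) : Prop :=
  ∃ c : ℤ, ∃ N : ℕ, ∀ n ≥ N,
    (flen A (A ⧸ maximalIdeal A ^ (n + 1)) : ℤ) = (e : ℤ) * (n + 1) - c

/-- `R` is an almost Gorenstein local ring (for the fixed canonical setting): there is an
exact sequence `0 → R → K_R → C → 0` with `mC = 0`; equivalently `m·K ⊆ R`. -/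
def IsAGLSetting (R : Type*) [CommRing R] [IsLocalRing R] (I : Ideal R) (a : R) : Prop :=
  maximalIdeal R • Kfrac R I a ≤ 1

/-- A one-dimensional Cohen-Macaulay local ring is almost Gorenstein. -/
def IsAGLRing (A : Type*) [CommRing A] [IsLocalRing A] : Prop :=
  ∃ (I : Ideal A) (a : A), CanSetting A I a ∧ maximalIdeal A • Kfrac A I a ≤ 1

/-- A one-dimensional local ring is Gorenstein: a fractional canonical ideal equals `R`. -/
def IsGorLoc (A : Type*) [CommRing A] [IsLocalRing A] : Prop :=
  ∃ (I : Ideal A) (a : A), CanSetting A I a ∧ Kfrac A I a = 1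

/-- A one-dimensional ring is Gorenstein: all localizations at maximal ideals are. -/
def IsGorRing (A : Type*) [CommRing A] : Prop :=
  ∀ P : Ideal A, ∀ hP : P.IsMaximal, by
    haveI := hP.isPrime
    exact IsGorLoc (Localization.AtPrime P)

/-- `R` is a `2`-almost Gorenstein local ring: `K² = K³` and `ℓ_R(K²/K) = 2`. -/
def IsTwoAGLK (R : Type*) [CommRing R] (I : Ideal R) (a : R) : Prop :=
  Kfrac R I a ^ 2 = Kfrac R I a ^ 3 ∧ colen (Kfrac R I a ^ 2) (Kfrac R I a) = 2

/-- A ring is a `2`-almost Gorenstein local ring: the Sally module of a canonical ideal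
with respect to a principal reduction has rank `2`. -/
def IsTwoAGLRing (A : Type*) [CommRing A] : Prop :=
  ∃ (I : Ideal A) (a : A), CanSetting A I a ∧ SallyRankIs A I a 2

end

/-!
As `a` is a non-zerodivisor it is a unit of `Q(R)`, and `aK = I`, so `aⁿKⁿ = Iⁿ`. Multiplying
`Kⁿ = Kⁿ⁺¹` by the unit `aⁿ⁺¹` turns it into `QIⁿ = Iⁿ⁺¹`: both sets of exponents coincide.
Since `1 ∈ K`, the powers `Kⁿ` increase; once they are stable, `Kⁿ` is a ring containing `K`,
hence equal to `S = R[K]`.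
-/

open Submodule IsLocalization

theorem pow_eq_of_pow_eq_pow_succ {M : Type*} [Monoid M] {x : M} {r : ℕ}
    (hr : x ^ r = x ^ (r + 1)) {n : ℕ} (hn : r ≤ n) : x ^ n = x ^ r := by
  induction n, hn using Nat.le_induction with
  | base => rfl
  | succ n _ ih => rw [pow_succ, ih, ← pow_succ, ← hr]

section Adjoin

variable {R A : Type*} [CommSemiring R] [Semiring A] [Algebra R A]

theorem Submodule.isUnit_span_singleton {x : A} (hx : IsUnit x) : IsUnit (span R {x}) := by
  obtain ⟨u, rfl⟩ := hx
  refine ⟨⟨span R {(u : A)}, span R {((u⁻¹ : Aˣ) : A)}, ?_, ?_⟩, rfl⟩ <;>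
    simp [span_mul_span, ← one_eq_span]

theorem Submodule.pow_le_toSubmodule_adjoin (M : Submodule R A) (n : ℕ) :
    M ^ n ≤ Subalgebra.toSubmodule (Algebra.adjoin R (M : Set A)) := by
  induction n with
  | zero => exact one_le.mpr (one_mem (Algebra.adjoin R (M : Set A)))
  | succ n ih =>
    calc M ^ (n + 1) = M ^ n * M := pow_succ M n
      _ ≤ _ * _ := mul_le_mul' ih fun _ hx => Algebra.subset_adjoin hx
      _ ≤ _ := (Subalgebra.isIdempotentElem_toSubmodule _).le

theorem Algebra.toSubmodule_adjoin_eq_pow {M : Submodule R A} (h1 : (1 : A) ∈ M) {r : ℕ}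
    (hr : M ^ r = M ^ (r + 1)) {n : ℕ} (hn : r ≤ n) :
    Subalgebra.toSubmodule (Algebra.adjoin R (M : Set A)) = M ^ n := by
  have hone : 1 ≤ M := one_le.mpr h1
  have hstab : ∀ m, r ≤ m → M ^ m = M ^ n := fun m hm =>
    (pow_eq_of_pow_eq_pow_succ hr hm).trans (pow_eq_of_pow_eq_pow_succ hr hn).symm
  have hmul : M ^ n * M ^ n = M ^ n := by rw [← pow_add, hstab _ (by omega)]
  have hM : M ≤ M ^ n := calc
    M = M ^ 1 := (pow_one M).symm
    _ ≤ M ^ (n + 1) := pow_le_pow_right' hone (by omega)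
    _ = M ^ n := hstab _ (by omega)
  let B : Subalgebra R A := (M ^ n).toSubalgebra (one_le.mp (one_le_pow_of_one_le' hone n))
    fun _ _ hx hy => hmul ▸ mul_mem_mul hx hy
  exact le_antisymm (Algebra.adjoin_le (S := B) hM) (pow_le_toSubmodule_adjoin M n)

end Adjoin

section Kfrac

variable {R : Type*} [CommRing R] {I : Ideal R} {a : R}

theorem one_mem_Kfrac (ha : a ∈ I) : (1 : FractionRing R) ∈ Kfrac R I a :=
  subset_span ⟨a, ha, one_mul _⟩

theorem span_algebraMap_mul_Kfrac (ha : a ∈ nonZeroDivisors R) :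
    span R {algebraMap R (FractionRing R) a} * Kfrac R I a =
      coeSubmodule (FractionRing R) I := by
  rw [Kfrac, span_mul_span, coeSubmodule, ← span_eq I, ← span_image, span_eq, Set.singleton_mul]
  congr 1
  ext y
  constructor
  · rintro ⟨z, ⟨x, hx, hz⟩, rfl⟩
    exact ⟨x, hx, ((mul_comm _ _).trans hz).symm⟩
  · rintro ⟨x, hx, rfl⟩
    exact ⟨mk' _ x ⟨a, ha⟩, ⟨x, hx, mk'_spec _ _ _⟩, (mul_comm _ _).trans (mk'_spec _ _ _)⟩

theorem span_algebraMap_pow_mul_Kfrac_pow (ha : a ∈ nonZeroDivisors R) (n : ℕ) :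
    span R {algebraMap R (FractionRing R) a} ^ n * Kfrac R I a ^ n =
      coeSubmodule (FractionRing R) (I ^ n) := by
  rw [← mul_pow, span_algebraMap_mul_Kfrac ha]
  exact (Submodule.map_pow I (Algebra.ofId R _) n).symm

theorem Kfrac_pow_eq_pow_succ_iff (ha : a ∈ nonZeroDivisors R) (n : ℕ) :
    Kfrac R I a ^ n = Kfrac R I a ^ (n + 1) ↔ I ^ (n + 1) = Ideal.span {a} * I ^ n := by
  have hx : IsUnit (span R {algebraMap R (FractionRing R) a}) :=
    isUnit_span_singleton (map_units _ ⟨a, ha⟩)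
  rw [← (hx.pow (n + 1)).mul_right_inj,
    ← (IsFractionRing.coeSubmodule_injective R (FractionRing R)).eq_iff,
    coeSubmodule_mul, coeSubmodule_span_singleton, ← span_algebraMap_pow_mul_Kfrac_pow ha,
    ← span_algebraMap_pow_mul_Kfrac_pow ha, pow_succ', mul_assoc, eq_comm]

end Kfrac

theorem reduction_number_eq_and_S_eq_pow_general (R : Type*) [CommRing R]
    (I : Ideal R) (a : R) (hset : CanSetting R I a) :
    sInf {n : ℕ | I ^ (n + 1) = Ideal.span {a} * I ^ n} =
      sInf {n : ℕ | Kfrac R I a ^ n = Kfrac R I a ^ (n + 1)} ∧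
    ∀ n : ℕ, sInf {n : ℕ | I ^ (n + 1) = Ideal.span {a} * I ^ n} ≤ n →
      Smod R I a = Kfrac R I a ^ n := by
  have hsets : {n : ℕ | I ^ (n + 1) = Ideal.span {a} * I ^ n} =
      {n : ℕ | Kfrac R I a ^ n = Kfrac R I a ^ (n + 1)} :=
    Set.ext fun n => (Kfrac_pow_eq_pow_succ_iff hset.nzd n).symm
  refine ⟨congrArg sInf hsets, fun n hn => ?_⟩
  rw [hsets] at hn
  have hr : sInf {n : ℕ | Kfrac R I a ^ n = Kfrac R I a ^ (n + 1)} ∈ _ :=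
    Nat.sInf_mem (by rw [← hsets]; exact hset.red)
  exact Algebra.toSubmodule_adjoin_eq_pow (one_mem_Kfrac hset.mem) hr hn

/-- **Lemma 2.2 (1).** `r_Q(I) = min {n ≥ 0 : Kⁿ = K^{n+1}}`; consequently `S = Kⁿ`
for every `n ≥ r_Q(I)`. -/
theorem reduction_number_eq_and_S_eq_pow (R : Type*) [CommRing R] [IsLocalRing R] [IsNoetherianRing R]
    (hdim : ringKrullDim R = 1)
    (hCM : ∃ x ∈ maximalIdeal R, x ∈ nonZeroDivisors R)
    (I : Ideal R) (a : R) (hset : CanSetting R I a) :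
    sInf {n : ℕ | I ^ (n + 1) = Ideal.span {a} * I ^ n} =
      sInf {n : ℕ | Kfrac R I a ^ n = Kfrac R I a ^ (n + 1)} ∧
    ∀ n : ℕ, sInf {n : ℕ | I ^ (n + 1) = Ideal.span {a} * I ^ n} ≤ n →
      Smod R I a = Kfrac R I a ^ n :=
  reduction_number_eq_and_S_eq_pow_general R I a hset
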